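/- With notation as above, the measure ν₀ = μ∗θ₀ + r₀·ρ∗θ₁ has natural spectrum: σ(ν₀) = closure of {ν̂₀(n) : n ∈ ℤ} = r₀·𝔻̄. -/

import Mathlib

/-!
The inclusion `σ(ν₀) ⊆ r₀𝔻̄` is Gelfand theory. Since `δ π * δ π = 1`, the measures `θ₀` and `θ₁`
are complementary idempotents, so every character kills one of them and sends `ν₀` either to a
spectral value of `μ * θ₀` or to `r₀` times a number of modulus at most `‖ρ‖ ≤ 1`. The
Fourier–Stieltjes coefficients are character values, hence lie in the closed set `σ(ν₀)`.

For odd `n`, `ν̂₀(n) = r₀ (e^{-inα} + e^{-inβ}) / 2`, and every point of `𝔻̄` is the midpoint of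
two points of the circle, so it remains to see that `(e^{-inα}, e^{-inβ})`, `n` odd, is dense in
the torus. This is Kronecker's theorem, proved by Bohr's argument: when `c` satisfies every
multiplicative relation of the unimodular `u₁, …, u_d`, the mean over `n` of
`|∑ c_j u_j^n|^{2k}` is the number of resonant pairs of words of length `k`, at least
`d^{2k} / (k + 1)^d`. Hence `sup_n |∑ c_j u_j^n| = d`, which forces all `c_j u_j^n` to be
nearly equal.
-/

open Complex Real Finset Filter Topology
open scoped Pointwise

theorem Finset.prod_comp_eq_prod_pow_card {α ι M : Type*} [Fintype α] [Fintype ι] [DecidableEq ι]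
    [CommMonoid M] (u : ι → M) (f : α → ι) :
    ∏ i, u (f i) = ∏ j, u j ^ #{i | f i = j} := by
  rw [← prod_fiberwise univ f]
  refine prod_congr rfl fun j _ => ?_
  rw [prod_congr rfl fun i hi => by rw [(mem_filter.mp hi).2], prod_const]

theorem Fintype.sq_card_le_card_image_mul_card_filter_eq {α β : Type*} [Fintype α] [DecidableEq β]
    (f : α → β) :
    Fintype.card α ^ 2 ≤ #(univ.image f) * #{p : α × α | f p.1 = f p.2} := by
  have hpairs : #{p : α × α | f p.1 = f p.2} = ∑ b ∈ univ.image f, #{a | f a = b} ^ 2 := by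
    rw [card_eq_sum_card_fiberwise (f := fun p : α × α => f p.1) (t := univ.image f)
      fun p _ => mem_image_of_mem f (mem_univ p.1)]
    refine Finset.sum_congr rfl fun b _ => ?_
    rw [sq, ← card_product]
    congr 1
    ext p
    simp only [mem_filter, mem_univ, true_and, mem_product]
    constructor
    · rintro ⟨h, rfl⟩; exact ⟨rfl, h.symm⟩
    · rintro ⟨h1, h2⟩; exact ⟨h1.trans h2.symm, h1⟩
  rw [hpairs, ← card_univ, card_eq_sum_card_image f]
  exact sq_sum_le_card_mul_sum_sq

theorem Finset.card_image_prod_comp_le {ι M : Type*} [Fintype ι] [DecidableEq ι] [CommMonoid M]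
    [DecidableEq M] (u : ι → M) (k : ℕ) :
    #(univ.image fun f : Fin k → ι => ∏ i, u (f i)) ≤ (k + 1) ^ Fintype.card ι := by
  calc #(univ.image fun f : Fin k → ι => ∏ i, u (f i))
      ≤ #((Fintype.piFinset fun _ : ι => range (k + 1)).image fun a => ∏ j, u j ^ a j) := by
        refine card_le_card fun x hx => ?_
        obtain ⟨f, -, rfl⟩ := mem_image.mp hx
        refine mem_image.mpr ⟨fun j => #{i | f i = j}, ?_, (prod_comp_eq_prod_pow_card u f).symm⟩
        simpa [Fintype.mem_piFinset, Nat.lt_succ_iff] using fun j => card_le_univ {i | f i = j}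
    _ ≤ (k + 1) ^ Fintype.card ι := card_image_le.trans (by simp)

theorem exists_succ_pow_mul_pow_lt_pow {a b : ℝ} (ha : 0 ≤ a) (hab : a < b) (d : ℕ) :
    ∃ k : ℕ, ((k : ℝ) + 1) ^ d * a ^ k < b ^ k := by
  have hb : 0 < b := ha.trans_lt hab
  have hlim := (tendsto_pow_const_mul_const_pow_of_lt_one d (div_nonneg ha hb.le)
    ((div_lt_one hb).mpr hab)).const_mul (2 ^ d)
  rw [mul_zero] at hlim
  obtain ⟨k, hk1, hk⟩ :=
    ((eventually_ge_atTop 1).and (hlim.eventually (gt_mem_nhds one_pos))).exists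
  refine ⟨k, ?_⟩
  have hk1' : (1 : ℝ) ≤ k := by exact_mod_cast hk1
  calc ((k : ℝ) + 1) ^ d * a ^ k ≤ (2 ^ d * ((k : ℝ) ^ d * (a / b) ^ k)) * b ^ k := by
        rw [div_pow, mul_assoc, mul_assoc, div_mul_cancel₀ _ (pow_pos hb k).ne', ← mul_assoc,
          ← mul_pow]
        gcongr
        linarith
    _ < 1 * b ^ k := by gcongr
    _ = b ^ k := one_mul _

theorem sum_sum_norm_sub_sq {ι E : Type*} [NormedAddCommGroup E] [InnerProductSpace ℝ E]
    (s : Finset ι) (w : ι → E) :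
    ∑ a ∈ s, ∑ b ∈ s, ‖w a - w b‖ ^ 2 =
      2 * #s * ∑ a ∈ s, ‖w a‖ ^ 2 - 2 * ‖∑ a ∈ s, w a‖ ^ 2 := by
  simp_rw [norm_sub_sq_real, sum_add_distrib, sum_sub_distrib, sum_const, ← mul_sum,
    ← inner_sum, ← sum_inner, real_inner_self_eq_norm_sq, ← sum_nsmul, nsmul_eq_mul, ← mul_sum]
  ring

theorem Circle.norm_coe_sub_sq_le {ι : Type*} [Fintype ι] (w : ι → Circle) (i j : ι) :
    ‖(w i : ℂ) - w j‖ ^ 2 ≤ 2 * ((Fintype.card ι : ℝ) ^ 2 - ‖∑ k, (w k : ℂ)‖ ^ 2) := by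
  have hsum := sum_sum_norm_sub_sq univ fun k => (w k : ℂ)
  simp only [Circle.norm_coe, one_pow, sum_const, card_univ, nsmul_eq_mul, mul_one] at hsum
  calc ‖(w i : ℂ) - w j‖ ^ 2 ≤ ∑ b, ‖(w i : ℂ) - w b‖ ^ 2 :=
        single_le_sum (f := fun b => ‖(w i : ℂ) - w b‖ ^ 2) (fun _ _ => by positivity) (mem_univ j)
    _ ≤ ∑ a, ∑ b, ‖(w a : ℂ) - w b‖ ^ 2 :=
        single_le_sum (f := fun a => ∑ b, ‖(w a : ℂ) - w b‖ ^ 2)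
          (fun _ _ => sum_nonneg fun _ _ => by positivity) (mem_univ i)
    _ = _ := by rw [hsum]; ring

theorem Circle.norm_geom_sum_le {v : Circle} (hv : v ≠ 1) (N : ℕ) :
    ‖∑ n ∈ range N, (v : ℂ) ^ n‖ ≤ 2 / ‖(v : ℂ) - 1‖ := by
  have hv' : (v : ℂ) ≠ 1 := by rwa [Ne, Circle.coe_eq_one]
  rw [geom_sum_eq hv', norm_div]
  gcongr
  calc ‖(v : ℂ) ^ N - 1‖ ≤ ‖(v : ℂ) ^ N‖ + ‖(1 : ℂ)‖ := norm_sub_le _ _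
    _ = 2 := by rw [norm_pow, Circle.norm_coe]; norm_num

open scoped Classical in
theorem Circle.tendsto_average_pow (v : Circle) :
    Tendsto (fun N : ℕ => (N : ℂ)⁻¹ * ∑ n ∈ range N, ((v ^ n : Circle) : ℂ)) atTop
      (𝓝 (if v = 1 then 1 else 0)) := by
  split_ifs with hv
  · refine tendsto_const_nhds.congr' ?_
    filter_upwards [eventually_ge_atTop 1] with N hN
    have : (N : ℂ) ≠ 0 := by exact_mod_cast (Nat.one_le_iff_ne_zero.mp hN)
    simp [hv, this]
  · have h := (tendsto_inv_atTop_nhds_zero_nat (𝕜 := ℝ)).const_mul (2 / ‖(v : ℂ) - 1‖)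
    rw [mul_zero] at h
    refine squeeze_zero_norm (fun N => ?_) h
    simp only [Circle.coe_pow, norm_mul, norm_inv, Complex.norm_natCast]
    rw [mul_comm]
    gcongr
    exact Circle.norm_geom_sum_le hv N

theorem Circle.prod_exp_pow {ι : Type*} [Fintype ι] (x : ι → ℝ) (a : ι → ℕ) :
    ∏ j, Circle.exp (x j) ^ a j = Circle.exp (∑ j, a j * x j) := by
  simp_rw [← Circle.exp_natCast_mul]
  exact (map_sum Circle.expHom (fun j => (a j : ℝ) * x j) univ).symm

theorem Circle.norm_coe_div_sub_one (v p : Circle) :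
    ‖((v / p : Circle) : ℂ) - 1‖ = ‖(v : ℂ) - p‖ := by
  rw [Circle.coe_div, ← div_self (Circle.coe_ne_zero p), ← sub_div, norm_div, Circle.norm_coe,
    div_one]

theorem Circle.coe_exp_neg_mul_pi_of_odd {n : ℤ} (hn : Odd n) :
    (Circle.exp (-(n * π)) : ℂ) = -1 := by
  obtain ⟨m, rfl⟩ := hn
  rw [show Circle.exp (-((2 * m + 1 : ℤ) * π)) = Circle.exp π from
    Circle.exp_eq_exp.mpr ⟨-(m + 1), by push_cast; ring⟩, Circle.coe_exp, exp_pi_mul_I]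

theorem Circle.exists_coe_add_eq_two_mul {w : ℂ} (hw : ‖w‖ ≤ 1) :
    ∃ p q : Circle, (p : ℂ) + q = 2 * w := by
  -- `e^{i(φ + θ)} + e^{i(φ - θ)} = 2 cos θ e^{iφ}`, with `φ = arg w` and `cos θ = ‖w‖`
  refine ⟨Circle.exp (arg w + arccos ‖w‖), Circle.exp (arg w - arccos ‖w‖), ?_⟩
  calc (Circle.exp (arg w + arccos ‖w‖) : ℂ) + Circle.exp (arg w - arccos ‖w‖)
      = Complex.exp (arg w * I) * (2 * Complex.cos (arccos ‖w‖)) := by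
        rw [Circle.coe_exp, Circle.coe_exp, two_cos, mul_add, ← Complex.exp_add,
          ← Complex.exp_add]
        push_cast
        ring_nf
    _ = 2 * w := by
        rw [← ofReal_cos, Real.cos_arccos (by linarith [norm_nonneg w]) hw, mul_left_comm,
          mul_comm (Complex.exp _), norm_mul_exp_arg_mul_I]

section Bohr

variable {ι : Type*} [Fintype ι] (c u : ι → Circle)

theorem Circle.normSq_sum_pow (k n : ℕ) :
    (normSq (∑ j, ((c j * u j ^ n : Circle) : ℂ)) : ℂ) ^ k =
      ∑ f : Fin k → ι, ∑ g : Fin k → ι,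
        (((∏ i, c (f i)) / (∏ i, c (g i)) * ((∏ i, u (f i)) / ∏ i, u (g i)) ^ n : Circle) : ℂ) := by
  classical
  have hpow : (∑ j, ((c j * u j ^ n : Circle) : ℂ)) ^ k =
      ∑ f : Fin k → ι, (((∏ i, c (f i)) * (∏ i, u (f i)) ^ n : Circle) : ℂ) := by
    rw [sum_pow', Fintype.piFinset_univ]
    refine sum_congr rfl fun f _ => ?_
    rw [← prod_pow, ← prod_mul_distrib]
    exact (map_prod Circle.coeHom (fun i => c (f i) * u (f i) ^ n) univ).symm
  rw [← mul_conj, mul_pow, ← map_pow, hpow, map_sum, sum_mul_sum]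
  refine sum_congr rfl fun f _ => sum_congr rfl fun g _ => ?_
  rw [← Circle.coe_inv_eq_conj, ← Circle.coe_mul, div_pow, div_mul_div_comm, div_eq_mul_inv]

open scoped Classical in
theorem Circle.tendsto_average_normSq_pow
    (hrel : ∀ a b : ι → ℕ, ∏ j, u j ^ a j = ∏ j, u j ^ b j → ∏ j, c j ^ a j = ∏ j, c j ^ b j)
    (k : ℕ) :
    Tendsto (fun N : ℕ => (N : ℝ)⁻¹ *
        ∑ n ∈ range N, normSq (∑ j, ((c j * u j ^ n : Circle) : ℂ)) ^ k) atTop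
      (𝓝 (#{p : (Fin k → ι) × (Fin k → ι) | ∏ i, u (p.1 i) = ∏ i, u (p.2 i)} : ℝ)) := by
  have hres (f g : Fin k → ι) (h : ∏ i, u (f i) = ∏ i, u (g i)) :
      ∏ i, c (f i) = ∏ i, c (g i) := by
    simp only [prod_comp_eq_prod_pow_card] at h ⊢
    exact hrel _ _ h
  have hexpand (N : ℕ) : ((N : ℝ)⁻¹ *
        ∑ n ∈ range N, normSq (∑ j, ((c j * u j ^ n : Circle) : ℂ)) ^ k : ℝ) =
      ∑ f : Fin k → ι, ∑ g : Fin k → ι, (((∏ i, c (f i)) / (∏ i, c (g i)) : Circle) : ℂ) *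
        ((N : ℂ)⁻¹ * ∑ n ∈ range N, ((((∏ i, u (f i)) / ∏ i, u (g i)) ^ n : Circle) : ℂ)) := by
    simp only [ofReal_mul, ofReal_inv, ofReal_natCast, ofReal_sum, ofReal_pow,
      Circle.normSq_sum_pow]
    simp only [Circle.coe_mul, mul_sum]
    rw [sum_comm]
    refine sum_congr rfl fun f _ => ?_
    rw [sum_comm]
    refine sum_congr rfl fun g _ => sum_congr rfl fun n _ => by ring
  have hlim : ∑ f : Fin k → ι, ∑ g : Fin k → ι, (((∏ i, c (f i)) / (∏ i, c (g i)) : Circle) : ℂ) *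
      (if (∏ i, u (f i)) / ∏ i, u (g i) = 1 then 1 else 0) =
      (#{p : (Fin k → ι) × (Fin k → ι) | ∏ i, u (p.1 i) = ∏ i, u (p.2 i)} : ℂ) := by
    rw [card_filter, Nat.cast_sum, Fintype.sum_prod_type]
    refine sum_congr rfl fun f _ => sum_congr rfl fun g _ => ?_
    by_cases h : ∏ i, u (f i) = ∏ i, u (g i)
    · simp [h, hres f g h]
    · simp [h, div_eq_one]
  have hC := tendsto_finsetSum univ fun (f : Fin k → ι) _ =>
    tendsto_finsetSum univ fun (g : Fin k → ι) _ =>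
      (Circle.tendsto_average_pow ((∏ i, u (f i)) / ∏ i, u (g i))).const_mul
        (((∏ i, c (f i)) / (∏ i, c (g i)) : Circle) : ℂ)
  rw [hlim, ← funext hexpand] at hC
  simpa only [Function.comp_def, ofReal_re, natCast_re] using
    (Complex.continuous_re.tendsto _).comp hC

theorem Circle.exists_card_sub_lt_norm_sum
    (hrel : ∀ a b : ι → ℕ, ∏ j, u j ^ a j = ∏ j, u j ^ b j → ∏ j, c j ^ a j = ∏ j, c j ^ b j)
    {ε : ℝ} (hε : 0 < ε) :
    ∃ n : ℕ, Fintype.card ι - ε < ‖∑ j, ((c j * u j ^ n : Circle) : ℂ)‖ := by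
  classical
  by_contra! hsmall
  set d : ℝ := (Fintype.card ι : ℝ)
  have hdε : 0 ≤ d - ε := (norm_nonneg _).trans (hsmall 0)
  obtain ⟨k, hk⟩ := exists_succ_pow_mul_pow_lt_pow (sq_nonneg (d - ε))
    (pow_lt_pow_left₀ (sub_lt_self d hε) hdε two_ne_zero) (Fintype.card ι)
  set R : ℝ := (#{p : (Fin k → ι) × (Fin k → ι) | ∏ i, u (p.1 i) = ∏ i, u (p.2 i)} : ℝ)
  have hR_le : R ≤ ((d - ε) ^ 2) ^ k := by
    refine le_of_tendsto' (Circle.tendsto_average_normSq_pow c u hrel k) fun N => ?_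
    have hterm (n : ℕ) : normSq (∑ j, ((c j * u j ^ n : Circle) : ℂ)) ^ k ≤ ((d - ε) ^ 2) ^ k := by
      rw [normSq_eq_norm_sq]
      gcongr
      exact hsmall n
    calc (N : ℝ)⁻¹ * ∑ n ∈ range N, normSq (∑ j, ((c j * u j ^ n : Circle) : ℂ)) ^ k
        ≤ (N : ℝ)⁻¹ * (N * ((d - ε) ^ 2) ^ k) := by
          gcongr
          simpa using sum_le_sum fun n (_ : n ∈ range N) => hterm n
      _ ≤ ((d - ε) ^ 2) ^ k := by
          rw [← mul_assoc]
          exact mul_le_of_le_one_left (by positivity) (inv_mul_le_one_of_le₀ le_rfl (by positivity))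
  have hR_ge : (d ^ 2) ^ k ≤ ((k : ℝ) + 1) ^ Fintype.card ι * R := by
    have h := (Fintype.sq_card_le_card_image_mul_card_filter_eq
      fun f : Fin k → ι => ∏ i, u (f i)).trans
      (Nat.mul_le_mul_right _ (card_image_prod_comp_le u k))
    simp only [Fintype.card_fun, Fintype.card_fin] at h
    rw [← pow_mul, mul_comm 2 k, pow_mul]
    simp only [d, R]
    exact_mod_cast h
  have := hR_ge.trans (mul_le_mul_of_nonneg_left hR_le (by positivity))
  linarith

theorem Circle.exists_forall_norm_sub_lt
    (hrel : ∀ a b : ι → ℕ, ∏ j, u j ^ a j = ∏ j, u j ^ b j → ∏ j, c j ^ a j = ∏ j, c j ^ b j)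
    {ε : ℝ} (hε : 0 < ε) :
    ∃ n : ℕ, ∀ i j, ‖((c i * u i ^ n : Circle) : ℂ) - (c j * u j ^ n : Circle)‖ < ε := by
  set d : ℝ := (Fintype.card ι : ℝ)
  -- `d ^ 2 - ‖∑ w‖ ^ 2 ≤ 2 * d * (d - ‖∑ w‖)` and `‖w i - w j‖ ^ 2 ≤ 2 * (d ^ 2 - ‖∑ w‖ ^ 2)`
  have hη : 0 < ε ^ 2 / (4 * d + 1) := by positivity
  obtain ⟨n, hn⟩ := Circle.exists_card_sub_lt_norm_sum c u hrel hη
  refine ⟨n, fun i j => ?_⟩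
  have hS : ‖∑ j, ((c j * u j ^ n : Circle) : ℂ)‖ ≤ d :=
    (norm_sum_le _ _).trans (by simp [Circle.norm_coe, d])
  have hη' : ε ^ 2 / (4 * d + 1) * (4 * d + 1) = ε ^ 2 := div_mul_cancel₀ _ (by positivity)
  have hsq := Circle.norm_coe_sub_sq_le (fun j => c j * u j ^ n) i j
  refine lt_of_pow_lt_pow_left₀ 2 hε.le (hsq.trans_lt ?_)
  nlinarith [norm_nonneg (∑ j, ((c j * u j ^ n : Circle) : ℂ))]

end Bohr

theorem LinearIndependent.int_coeffs_eq_zero {x y z : ℝ} (h : LinearIndependent ℚ ![x, y, z])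
    {p q r : ℤ} (hpqr : p * x + q * y + r * z = 0) : p = 0 ∧ q = 0 ∧ r = 0 := by
  have h0 := Fintype.linearIndependent_iff.mp h ![(p : ℚ), q, r] (by
    simp only [Fin.sum_univ_three, Matrix.cons_val_zero, Matrix.cons_val_one, Matrix.cons_val_two,
      Matrix.head_cons, Matrix.tail_cons, Rat.smul_def, Rat.cast_intCast]
    exact hpqr)
  exact ⟨by simpa using h0 0, by simpa using h0 1, by simpa using h0 2⟩

theorem prod_exp_pow_eq_of_linearIndependent {α β : ℝ} (hind : LinearIndependent ℚ ![α, β, π])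
    (s t : ℝ) {a b : Fin 4 → ℕ}
    (h : ∏ j, Circle.exp (![0, -α, -β, π] j) ^ a j = ∏ j, Circle.exp (![0, -α, -β, π] j) ^ b j) :
    ∏ j, Circle.exp (![0, -s, -t, π] j) ^ a j = ∏ j, Circle.exp (![0, -s, -t, π] j) ^ b j := by
  simp only [Circle.prod_exp_pow, Circle.exp_eq_exp, Fin.sum_univ_four, Matrix.cons_val_zero,
    Matrix.cons_val_one, Matrix.cons_val_two, Matrix.cons_val_three, Matrix.head_cons,
    Matrix.tail_cons, mul_zero, zero_add] at h ⊢
  obtain ⟨m, hm⟩ := h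
  obtain ⟨h1, h2, h3⟩ := hind.int_coeffs_eq_zero (p := b 1 - a 1) (q := b 2 - a 2)
    (r := a 3 - b 3 - 2 * m) (by push_cast; linarith)
  have h3' : (a 3 : ℝ) = b 3 + 2 * m := by exact_mod_cast (by omega : (a 3 : ℤ) = b 3 + 2 * m)
  refine ⟨m, ?_⟩
  rw [show a 1 = b 1 by omega, show a 2 = b 2 by omega, h3']
  ring

theorem exists_odd_norm_exp_sub_lt {α β : ℝ} (hind : LinearIndependent ℚ ![α, β, π])
    (p q : Circle) {ε : ℝ} (hε : 0 < ε) :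
    ∃ n : ℕ, Odd n ∧ ‖(Circle.exp (-(n * α)) : ℂ) - p‖ < ε ∧
      ‖(Circle.exp (-(n * β)) : ℂ) - q‖ < ε := by
  obtain ⟨s, rfl⟩ := Circle.exp_surjective p
  obtain ⟨t, rfl⟩ := Circle.exp_surjective q
  -- The coordinate `0` pins one term at `1`; the coordinate `π` detects the parity of `n`.
  obtain ⟨n, hn⟩ := Circle.exists_forall_norm_sub_lt (fun j => Circle.exp (![0, -s, -t, π] j))
    (fun j => Circle.exp (![0, -α, -β, π] j))
    (fun _ _ => prod_exp_pow_eq_of_linearIndependent hind s t) (lt_min hε two_pos)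
  have hc0 : Circle.exp (![0, -s, -t, π] 0) * Circle.exp (![0, -α, -β, π] 0) ^ n = 1 := by simp
  have hrot (y x : ℝ) :
      Circle.exp (-y) * Circle.exp (-x) ^ n = Circle.exp (-(n * x)) / Circle.exp y := by
    rw [← Circle.exp_natCast_mul, ← Circle.exp_add, ← Circle.exp_sub]
    ring_nf
  have hα := hn 1 0
  have hβ := hn 2 0
  have hπ := hn 3 0
  rw [hc0, Circle.coe_one] at hα hβ hπ
  simp only [Matrix.cons_val_zero, Matrix.cons_val_one, Matrix.cons_val_two,
    Matrix.cons_val_three, Matrix.head_cons, Matrix.tail_cons] at hα hβ hπ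
  rw [hrot, Circle.norm_coe_div_sub_one] at hα hβ
  refine ⟨n, ?_, hα.trans_le (min_le_left _ _), hβ.trans_le (min_le_left _ _)⟩
  by_contra hev
  obtain ⟨m, rfl⟩ := Nat.not_odd_iff_even.mp hev
  have hpi : Circle.exp π * Circle.exp π ^ (m + m) = Circle.exp π := by
    rw [← Circle.exp_natCast_mul, ← Circle.exp_add]
    exact Circle.exp_eq_exp.mpr ⟨m, by push_cast; ring⟩
  rw [hpi, Circle.coe_exp, exp_pi_mul_I] at hπ
  norm_num at hπ

theorem closedBall_subset_closure_odd_average {α β : ℝ} (hind : LinearIndependent ℚ ![α, β, π]) :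
    Metric.closedBall (0 : ℂ) 1 ⊆ closure {w | ∃ n : ℕ, Odd n ∧
      w = ((Circle.exp (-(n * α)) : ℂ) + Circle.exp (-(n * β))) / 2} := by
  intro w hw
  obtain ⟨p, q, hpq⟩ := Circle.exists_coe_add_eq_two_mul (mem_closedBall_zero_iff.mp hw)
  refine Metric.mem_closure_iff.mpr fun ε hε => ?_
  obtain ⟨n, hn, hα, hβ⟩ := exists_odd_norm_exp_sub_lt hind p q hε
  refine ⟨_, ⟨n, hn, rfl⟩, ?_⟩
  set a : ℂ := (Circle.exp (-(n * α)) : ℂ)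
  set b : ℂ := (Circle.exp (-(n * β)) : ℂ)
  calc dist w ((a + b) / 2) = ‖(p - a) + (q - b)‖ / 2 := by
        rw [dist_eq_norm, show w - (a + b) / 2 = ((p - a) + (q - b)) / 2 by
          linear_combination -hpq / 2, norm_div, RCLike.norm_ofNat]
    _ ≤ (‖a - p‖ + ‖b - q‖) / 2 := by
        rw [norm_sub_rev a, norm_sub_rev b]
        gcongr
        exact norm_add_le _ _
    _ < ε := by linarith

theorem mul_eq_zero_and_add_eq_one_of_mul_self_eq_one {A : Type*} [Ring A] [Algebra ℂ A] {x : A}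
    (hx : x * x = 1) :
    (1 / 2 : ℂ) • (1 + x) * (1 / 2 : ℂ) • (1 - x) = 0 ∧
      (1 / 2 : ℂ) • (1 + x) + (1 / 2 : ℂ) • (1 - x) = 1 := by
  constructor
  · rw [smul_mul_smul_comm, show (1 + x) * (1 - x) = 1 - x * x by noncomm_ring, hx, sub_self,
      smul_zero]
  · rw [← smul_add, add_add_sub_cancel, ← two_smul ℂ, smul_smul]
    norm_num

theorem map_eq_zero_one_or_one_zero {F A R : Type*} [NonAssocSemiring A] [NonAssocSemiring R]
    [NoZeroDivisors R] [FunLike F A R] [RingHomClass F A R] (φ : F) {e₀ e₁ : A}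
    (h0 : e₀ * e₁ = 0) (h1 : e₀ + e₁ = 1) :
    (φ e₀ = 0 ∧ φ e₁ = 1) ∨ (φ e₀ = 1 ∧ φ e₁ = 0) := by
  have hadd : φ e₀ + φ e₁ = 1 := by rw [← map_add, h1, map_one]
  rcases mul_eq_zero.mp (by rw [← map_mul, h0, map_zero] : φ e₀ * φ e₁ = 0) with h | h
  · exact .inl ⟨h, by rwa [h, zero_add] at hadd⟩
  · exact .inr ⟨by rwa [h, add_zero] at hadd, h⟩

theorem spectrum.norm_le_toReal_spectralRadius {𝕜 A : Type*} [NormedField 𝕜] [NormedRing A]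
    [NormedAlgebra 𝕜 A] [CompleteSpace A] [NormOneClass A] {a : A} {k : 𝕜}
    (hk : k ∈ spectrum 𝕜 a) : ‖k‖ ≤ (spectralRadius 𝕜 a).toReal := by
  have h : (‖k‖₊ : ENNReal) ≤ spectralRadius 𝕜 a :=
    le_iSup₂ (f := fun k (_ : k ∈ spectrum 𝕜 a) => (‖k‖₊ : ENNReal)) k hk
  simpa using ENNReal.toReal_mono
    (ne_top_of_le_ne_top ENNReal.coe_ne_top (spectrum.spectralRadius_le_nnnorm a)) h

theorem spectrum_subset_closedBall_of_mul_eq_zero_of_add_eq_one {A : Type*} [NormedCommRing A]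
    [NormedAlgebra ℂ A] [CompleteSpace A] [NormOneClass A] {e₀ e₁ : A} (h0 : e₀ * e₁ = 0)
    (h1 : e₀ + e₁ = 1) (a : A) {b : A} (hb : ‖b‖ ≤ 1) :
    spectrum ℂ (a * e₀ + ((spectralRadius ℂ (a * e₀)).toReal : ℂ) • (b * e₁)) ⊆
      Metric.closedBall 0 (spectralRadius ℂ (a * e₀)).toReal := by
  intro z hz
  obtain ⟨φ, rfl⟩ := WeakDual.CharacterSpace.mem_spectrum_iff_exists.mp hz
  rw [mem_closedBall_zero_iff, map_add, map_smul, map_mul φ b]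
  rcases map_eq_zero_one_or_one_zero φ h0 h1 with ⟨hφ0, hφ1⟩ | ⟨-, hφ1⟩
  · rw [map_mul, hφ0, hφ1, mul_zero, zero_add, mul_one, smul_eq_mul, norm_mul, norm_real,
      norm_of_nonneg ENNReal.toReal_nonneg]
    exact mul_le_of_le_one_right ENNReal.toReal_nonneg ((AlgHom.norm_apply_le_self φ b).trans hb)
  · rw [hφ1, mul_zero, smul_zero, add_zero]
    exact spectrum.norm_le_toReal_spectralRadius (AlgHom.apply_mem_spectrum φ _)

theorem closedBall_subset_closure_smul {E : Type*} [NormedAddCommGroup E] [NormedSpace ℝ E]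
    {A : Set E} (h : Metric.closedBall 0 1 ⊆ closure A) {r : ℝ} (hr : 0 ≤ r) :
    Metric.closedBall (0 : E) r ⊆ closure (r • A) := by
  rw [← smul_unitClosedBall_of_nonneg hr]
  exact (Set.smul_set_mono h).trans (smul_closure_subset _ _)

theorem nu0_natural_spectrum_general (M : Type*) [NormedCommRing M] [NormedAlgebra ℂ M]
    [CompleteSpace M]
    (δ : ℝ → M) (hδ : ∀ x y : ℝ, δ x * δ y = δ (x + y))
    (hone : δ 0 = 1) (hper : ∀ x : ℝ, δ (x + 2 * π) = δ x)
    (hnorm : ∀ x : ℝ, ‖δ x‖ = 1)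
    (F : ℤ → (M →ₐ[ℂ] ℂ))
    (hF : ∀ (n : ℤ) (x : ℝ), F n (δ x) = Complex.exp (-((n : ℂ) * (x : ℂ)) * Complex.I))
    (α β : ℝ)
    (hind : LinearIndependent ℚ ![α, β, π])
    (θ₀ θ₁ ρ : M)
    (hθ₀ : θ₀ = (1 / 2 : ℂ) • (δ 0 + δ π))
    (hθ₁ : θ₁ = (1 / 2 : ℂ) • (δ 0 - δ π))
    (hρ : ρ = (1 / 2 : ℂ) • (δ α + δ β))
    (μ : M) (r₀ : ℝ) (hr₀ : r₀ = (spectralRadius ℂ (μ * θ₀)).toReal)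
    (ν₀ : M) (hν₀ : ν₀ = μ * θ₀ + (r₀ : ℂ) • (ρ * θ₁)) :
    spectrum ℂ ν₀ = closure {w : ℂ | ∃ n : ℤ, w = F n ν₀} ∧
    closure {w : ℂ | ∃ n : ℤ, w = F n ν₀} = Metric.closedBall (0 : ℂ) r₀ := by
  have : NormOneClass M := ⟨hone ▸ hnorm 0⟩
  have hδπ : δ π * δ π = 1 := by rw [hδ, ← two_mul, ← zero_add (2 * π), hper, hone]
  obtain ⟨horth, hcompl⟩ : θ₀ * θ₁ = 0 ∧ θ₀ + θ₁ = 1 := by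
    rw [hθ₀, hθ₁, hone]; exact mul_eq_zero_and_add_eq_one_of_mul_self_eq_one hδπ
  have hρ1 : ‖ρ‖ ≤ 1 := by
    rw [hρ, norm_smul, show ‖(1 / 2 : ℂ)‖ = 1 / 2 by norm_num]
    linarith [norm_add_le (δ α) (δ β), hnorm α, hnorm β]
  have hupper : spectrum ℂ ν₀ ⊆ Metric.closedBall 0 r₀ := by
    have h := spectrum_subset_closedBall_of_mul_eq_zero_of_add_eq_one horth hcompl μ hρ1
    rwa [← hr₀, ← hν₀] at h
  have hchar (n : ℤ) (x : ℝ) : F n (δ x) = Circle.exp (-(n * x)) := by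
    rw [hF, Circle.coe_exp]; push_cast; ring_nf
  have hodd (n : ℕ) (hn : Odd n) :
      F n ν₀ = r₀ * (((Circle.exp (-(n * α)) : ℂ) + Circle.exp (-(n * β))) / 2) := by
    have hπ : F n (δ π) = -1 := by
      rw [hchar]; exact Circle.coe_exp_neg_mul_pi_of_odd (by exact_mod_cast hn)
    simp only [hν₀, hρ, hθ₀, hθ₁, map_add, map_sub, map_mul, map_smul, hπ, hone, map_one]
    simp only [hchar]
    push_cast
    ring
  have hmid : closure {w : ℂ | ∃ n : ℤ, w = F n ν₀} ⊆ spectrum ℂ ν₀ :=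
    closure_minimal (by rintro _ ⟨n, rfl⟩; exact AlgHom.apply_mem_spectrum (F n) ν₀)
      (spectrum.isClosed ν₀)
  have hlower : Metric.closedBall 0 r₀ ⊆ closure {w : ℂ | ∃ n : ℤ, w = F n ν₀} := by
    refine (closedBall_subset_closure_smul (closedBall_subset_closure_odd_average hind)
      (hr₀ ▸ ENNReal.toReal_nonneg)).trans (closure_mono ?_)
    rintro _ ⟨_, ⟨n, hn, rfl⟩, rfl⟩
    exact ⟨n, by rw [hodd n hn]; exact Complex.real_smul⟩
  exact ⟨(hupper.trans hlower).antisymm hmid, (hmid.trans hupper).antisymm hlower⟩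

/-- ν₀ = μ∗θ₀ + r₀·ρ∗θ₁ has natural spectrum:
σ(ν₀) = closure {ν̂₀(n) : n ∈ ℤ} = r₀·𝔻̄. -/
theorem nu0_natural_spectrum (M : Type*) [NormedCommRing M] [NormedAlgebra ℂ M]
    [CompleteSpace M]
    (δ : ℝ → M) (hδ : ∀ x y : ℝ, δ x * δ y = δ (x + y))
    (hone : δ 0 = 1) (hper : ∀ x : ℝ, δ (x + 2 * π) = δ x)
    (hnorm : ∀ x : ℝ, ‖δ x‖ = 1)
    (F : ℤ → (M →ₐ[ℂ] ℂ))
    (hF : ∀ (n : ℤ) (x : ℝ), F n (δ x) = Complex.exp (-((n : ℂ) * (x : ℂ)) * Complex.I))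
    (α β : ℝ)
    (hα : α ∈ Set.Ioo (0 : ℝ) (2 * π)) (hβ : β ∈ Set.Ioo (0 : ℝ) (2 * π))
    (hind : LinearIndependent ℚ ![α, β, π])
    (θ₀ θ₁ ρ : M)
    (hθ₀ : θ₀ = (1 / 2 : ℂ) • (δ 0 + δ π))
    (hθ₁ : θ₁ = (1 / 2 : ℂ) • (δ 0 - δ π))
    (hρ : ρ = (1 / 2 : ℂ) • (δ α + δ β))
    (μ : M) (r₀ : ℝ) (hr₀ : r₀ = (spectralRadius ℂ (μ * θ₀)).toReal)
    (ν₀ : M) (hν₀ : ν₀ = μ * θ₀ + (r₀ : ℂ) • (ρ * θ₁)) :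
    spectrum ℂ ν₀ = closure {w : ℂ | ∃ n : ℤ, w = F n ν₀} ∧
    closure {w : ℂ | ∃ n : ℤ, w = F n ν₀} = Metric.closedBall (0 : ℂ) r₀ :=
  nu0_natural_spectrum_general M δ hδ hone hper hnorm F hF α β hind θ₀ θ₁ ρ hθ₀ hθ₁ hρ μ r₀ hr₀ ν₀
    hν₀
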